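/- Moment bound by induction: let f_m : [s,t] → ℝ (m ≥ 1) be continuous nonnegative functions with f_m(s) = 0 satisfying f₁(u) ≤ L(u−s) + ∫_s^u f₁(r) dr and f_m(u) ≤ 2m²L ∫_s^u f_{m−1}(r) dr + 2m ∫_s^u f_m(r) dr for m ≥ 2 and all u ∈ [s,t], for some constant L > 0. Then for each m there exists a constant K_m (depending only on m, L, and an upper bound on t − s) such that f_m(t) ≤ K_m (t − s)^m. -/
import Mathlib

open Set intervalIntegral

private lemma my_integral_sub_pow (s u : ℝ) (j : ℕ) :
    ∫ r in s..u, (r - s) ^ j = (u - s) ^ (j + 1) / (j + 1) := by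
  rw [intervalIntegral.integral_comp_sub_right (fun x => x ^ j) s, integral_pow]
  simp

private lemma my_integrable_of_mem (s t u : ℝ) (g : ℝ → ℝ)
    (hg : ContinuousOn g (Set.Icc s t))
    (hs : s ≤ u) (hu : u ≤ t) : IntervalIntegrable g MeasureTheory.volume s u := by
  apply ContinuousOn.intervalIntegrable
  apply hg.mono
  rw [Set.uIcc_of_le hs]
  exact Set.Icc_subset_Icc le_rfl hu

private lemma my_gronwall_poly (s t a b M : ℝ) (hst : s ≤ t) (ha : 0 ≤ a) (hb : 0 ≤ b)
    (m : ℕ) (g : ℝ → ℝ) (hg : ContinuousOn g (Set.Icc s t))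
    (hM : ∀ u ∈ Set.Icc s t, g u ≤ M)
    (hineq : ∀ u ∈ Set.Icc s t, g u ≤ a * (u - s) ^ m + b * ∫ r in s..u, g r) :
    ∀ u ∈ Set.Icc s t, g u ≤ a * Real.exp (b * (t - s)) * (u - s) ^ m := by
  set S : ℕ → ℝ → ℝ := fun n u =>
    ∑ k ∈ Finset.range n, (a * b ^ k / k.factorial) * (u - s) ^ (m + k) with hS
  set R : ℕ → ℝ → ℝ := fun n u => (M * b ^ n / n.factorial) * (u - s) ^ n with hR
  have claim : ∀ n, ∀ u ∈ Set.Icc s t, g u ≤ S n u + R n u := by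
    intro n
    induction n with
    | zero => intro u hu; simpa [hS, hR] using hM u hu
    | succ n ih =>
      intro u hu
      obtain ⟨hsu, hut⟩ := hu
      have hint_g : IntervalIntegrable g MeasureTheory.volume s u :=
        my_integrable_of_mem s t u g hg hsu hut
      have hcont : Continuous (fun r => S n r + R n r) := by
        simp only [hS, hR]; fun_prop
      have hmono : (∫ r in s..u, g r) ≤ ∫ r in s..u, (S n r + R n r) := by
        apply intervalIntegral.integral_mono_on hsu hint_g
          (hcont.intervalIntegrable _ _)
        intro r hr
        exact ih r ⟨hr.1, hr.2.trans hut⟩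
      have hval : (∫ r in s..u, (S n r + R n r)) =
          (∑ k ∈ Finset.range n,
            (a * b ^ k / k.factorial) * ((u - s) ^ (m + k + 1) / (m + k + 1)))
          + (M * b ^ n / n.factorial) * ((u - s) ^ (n + 1) / (n + 1)) := by
        have hcS : Continuous fun r : ℝ => S n r := by simp only [hS]; fun_prop
        have hcR : Continuous fun r : ℝ => R n r := by simp only [hR]; fun_prop
        rw [intervalIntegral.integral_add (hcS.intervalIntegrable _ _)
          (hcR.intervalIntegrable _ _)]
        congr 1
        · simp only [hS]
          rw [intervalIntegral.integral_finset_sum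
            (fun k _ => Continuous.intervalIntegrable (by fun_prop) _ _)]
          refine Finset.sum_congr rfl fun k _ => ?_
          rw [intervalIntegral.integral_const_mul, my_integral_sub_pow]
          push_cast
          try ring
        · simp only [hR]
          rw [intervalIntegral.integral_const_mul, my_integral_sub_pow]
      have hx : 0 ≤ u - s := sub_nonneg.2 hsu
      have hlast : a * (u - s) ^ m + b * (∫ r in s..u, (S n r + R n r))
        ≤ S (n + 1) u + R (n + 1) u := by
        rw [hval]
        have hSexp : S (n + 1) u =
            (∑ k ∈ Finset.range n,
              (a * b ^ (k + 1) / (k + 1).factorial) * (u - s) ^ (m + (k + 1)))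
            + (a * b ^ 0 / Nat.factorial 0) * (u - s) ^ (m + 0) := by
          simp only [hS]; exact Finset.sum_range_succ' _ n
        have hterm : ∀ k ∈ Finset.range n,
            b * ((a * b ^ k / k.factorial) * ((u - s) ^ (m + k + 1) / (m + k + 1)))
            ≤ (a * b ^ (k + 1) / (k + 1).factorial) * (u - s) ^ (m + (k + 1)) := by
          intro k _
          have hfp : (0 : ℝ) < k.factorial := by positivity
          have hd1 : ((k : ℝ) + 1) ≠ 0 := by positivity
          have hd2 : ((m : ℝ) + k + 1) ≠ 0 := by positivity
          have h1 : b * ((a * b ^ k / k.factorial) * ((u - s) ^ (m + k + 1) / ((m : ℝ) + k + 1)))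
              = (a * b ^ (k + 1) * (u - s) ^ (m + k + 1)) / (((m : ℝ) + k + 1) * k.factorial) := by
            rw [pow_succ]; field_simp; ring
          have h2 : (a * b ^ (k + 1) / (k + 1).factorial) * (u - s) ^ (m + (k + 1))
              = (a * b ^ (k + 1) * (u - s) ^ (m + k + 1)) / (((k : ℝ) + 1) * k.factorial) := by
            rw [Nat.factorial_succ, show m + (k + 1) = m + k + 1 from rfl]
            push_cast; field_simp
          have h3 : b * ((a * b ^ k / k.factorial) * ((u - s) ^ (m + k + 1) / (m + k + 1)))
              = b * ((a * b ^ k / k.factorial) * ((u - s) ^ (m + k + 1) / ((m : ℝ) + k + 1))) := by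
            push_cast; ring
          rw [h3, h1, h2]
          refine div_le_div_of_nonneg_left (by positivity) (by positivity) ?_
          have hm0 : (0 : ℝ) ≤ m := Nat.cast_nonneg m
          have hk : (k : ℝ) + 1 ≤ (m : ℝ) + k + 1 := by linarith
          exact mul_le_mul_of_nonneg_right hk hfp.le
        have hsum : b * (∑ k ∈ Finset.range n,
              (a * b ^ k / k.factorial) * ((u - s) ^ (m + k + 1) / (m + k + 1)))
            ≤ ∑ k ∈ Finset.range n,
              (a * b ^ (k + 1) / (k + 1).factorial) * (u - s) ^ (m + (k + 1)) := by
          rw [Finset.mul_sum]; exact Finset.sum_le_sum hterm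
        have hMeq : b * ((M * b ^ n / n.factorial) * ((u - s) ^ (n + 1) / (n + 1)))
            = R (n + 1) u := by
          simp only [hR, Nat.factorial_succ, pow_succ]
          push_cast
          have hfp : (0 : ℝ) < n.factorial := by positivity
          field_simp
        have h00 : (a * b ^ 0 / Nat.factorial 0) * (u - s) ^ (m + 0) = a * (u - s) ^ m := by
          simp
        rw [hSexp, h00, mul_add]
        linarith
      calc g u ≤ a * (u - s) ^ m + b * ∫ r in s..u, g r := hineq u ⟨hsu, hut⟩
        _ ≤ a * (u - s) ^ m + b * ∫ r in s..u, (S n r + R n r) := by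
            have := mul_le_mul_of_nonneg_left hmono hb; linarith
        _ ≤ S (n + 1) u + R (n + 1) u := hlast
  intro u hu
  have hx : 0 ≤ u - s := sub_nonneg.2 hu.1
  have hxt : u - s ≤ t - s := by linarith [hu.2]
  set C := a * Real.exp (b * (t - s)) * (u - s) ^ m with hC
  have hSle : ∀ n, S n u ≤ C := by
    intro n
    have h0 : S n u = a * (u - s) ^ m *
        ∑ k ∈ Finset.range n, (b * (u - s)) ^ k / k.factorial := by
      rw [Finset.mul_sum]
      refine Finset.sum_congr rfl fun k _ => ?_
      rw [mul_pow, pow_add]; ring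
    rw [h0, hC]
    have h1 : ∑ k ∈ Finset.range n, (b * (u - s)) ^ k / k.factorial
        ≤ Real.exp (b * (u - s)) := by
      simpa using Real.sum_le_exp_of_nonneg (by positivity) n
    have h2 : Real.exp (b * (u - s)) ≤ Real.exp (b * (t - s)) :=
      Real.exp_le_exp.2 (by nlinarith)
    calc a * (u - s) ^ m * ∑ k ∈ Finset.range n, (b * (u - s)) ^ k / k.factorial
        ≤ a * (u - s) ^ m * Real.exp (b * (t - s)) :=
          mul_le_mul_of_nonneg_left (h1.trans h2) (by positivity)
      _ = a * Real.exp (b * (t - s)) * (u - s) ^ m := by ring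
  have hR0 : Filter.Tendsto (fun n => R n u) Filter.atTop (nhds 0) := by
    have heq : (fun n => R n u) = fun n => M * ((b * (u - s)) ^ n / n.factorial) := by
      funext n; simp only [hR, mul_pow]; ring
    rw [heq]
    simpa using (FloorSemiring.tendsto_pow_div_factorial_atTop (b * (u - s))).const_mul M
  have : Filter.Tendsto (fun n => C + R n u) Filter.atTop (nhds C) := by
    simpa using (hR0.const_add C)
  refine ge_of_tendsto' this fun n => ?_
  calc g u ≤ S n u + R n u := claim n u hu
    _ ≤ C + R n u := by linarith [hSle n]

private lemma my_main (L T₀ : ℝ) (hL : 0 < L) (hT₀ : 0 < T₀) :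
    ∀ m : ℕ, 1 ≤ m → ∃ K : ℝ, 0 ≤ K ∧ ∀ s t : ℝ, s ≤ t → t - s ≤ T₀ →
      ∀ f : ℕ → ℝ → ℝ,
        (∀ k, ContinuousOn (f k) (Set.Icc s t)) →
        (∀ k, ∀ u ∈ Set.Icc s t, 0 ≤ f k u) →
        (∀ k, f k s = 0) →
        (∀ u ∈ Set.Icc s t, f 1 u ≤ L * (u - s) + ∫ r in s..u, f 1 r) →
        (∀ k, 2 ≤ k → ∀ u ∈ Set.Icc s t,
          f k u ≤ 2 * (k : ℝ) ^ 2 * L * (∫ r in s..u, f (k - 1) r)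
            + 2 * (k : ℝ) * ∫ r in s..u, f k r) →
        ∀ u ∈ Set.Icc s t, f m u ≤ K * (u - s) ^ m := by
  intro m hm
  induction m, hm using Nat.le_induction with
  | base =>
    refine ⟨L * Real.exp T₀, by positivity, ?_⟩
    intro s t hst hT f hcont hnn hzero h1 h2 u hu
    obtain ⟨M, hMb⟩ := (isCompact_Icc).exists_bound_of_continuousOn (hcont 1)
    have hM : ∀ v ∈ Set.Icc s t, f 1 v ≤ M := fun v hv =>
      (le_abs_self _).trans (by simpa [Real.norm_eq_abs] using hMb v hv)
    have hineq : ∀ v ∈ Set.Icc s t, f 1 v ≤ L * (v - s) ^ 1 + 1 * ∫ r in s..v, f 1 r := by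
      intro v hv; simpa using h1 v hv
    have hg := my_gronwall_poly s t L 1 M hst hL.le zero_le_one 1 (f 1) (hcont 1) hM hineq u hu
    have hx : 0 ≤ u - s := sub_nonneg.2 hu.1
    have hexp : Real.exp (1 * (t - s)) ≤ Real.exp T₀ := by
      rw [Real.exp_le_exp]; linarith
    calc f 1 u ≤ L * Real.exp (1 * (t - s)) * (u - s) ^ 1 := hg
      _ ≤ L * Real.exp T₀ * (u - s) ^ 1 := by
        have := mul_le_mul_of_nonneg_left hexp hL.le
        exact mul_le_mul_of_nonneg_right this (by positivity)
  | succ m hm ih =>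
    obtain ⟨K, hK0, hKb⟩ := ih
    set a : ℝ := 2 * ((m : ℝ) + 1) ^ 2 * L * K with ha_def
    set b : ℝ := 2 * ((m : ℝ) + 1) with hb_def
    have ha : 0 ≤ a := by positivity
    have hb : 0 ≤ b := by positivity
    refine ⟨a * Real.exp (b * T₀), by positivity, ?_⟩
    intro s t hst hT f hcont hnn hzero h1 h2 u hu
    obtain ⟨M, hMb⟩ := (isCompact_Icc).exists_bound_of_continuousOn (hcont (m + 1))
    have hM : ∀ v ∈ Set.Icc s t, f (m + 1) v ≤ M := fun v hv =>
      (le_abs_self _).trans (by simpa [Real.norm_eq_abs] using hMb v hv)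
    have hprev := hKb s t hst hT f hcont hnn hzero h1 h2
    have hineq : ∀ v ∈ Set.Icc s t,
        f (m + 1) v ≤ a * (v - s) ^ (m + 1) + b * ∫ r in s..v, f (m + 1) r := by
      intro v hv
      have hv1 : s ≤ v := hv.1
      have hx : 0 ≤ v - s := sub_nonneg.2 hv1
      have hstep := h2 (m + 1) (by omega) v hv
      simp only [Nat.add_sub_cancel] at hstep
      have hintm : IntervalIntegrable (f m) MeasureTheory.volume s v :=
        my_integrable_of_mem s t v (f m) (hcont m) hv1 hv.2
      have hintp : IntervalIntegrable (fun r => K * (r - s) ^ m) MeasureTheory.volume s v :=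
        Continuous.intervalIntegrable (by fun_prop) _ _
      have hmono : (∫ r in s..v, f m r) ≤ ∫ r in s..v, K * (r - s) ^ m := by
        apply intervalIntegral.integral_mono_on hv1 hintm hintp
        intro r hr
        exact hprev r ⟨hr.1, hr.2.trans hv.2⟩
      have hcalc : (∫ r in s..v, K * (r - s) ^ m) ≤ K * (v - s) ^ (m + 1) := by
        rw [intervalIntegral.integral_const_mul, my_integral_sub_pow]
        have hd : (1 : ℝ) ≤ (m : ℝ) + 1 := by
          have : (0 : ℝ) ≤ m := Nat.cast_nonneg m
          linarith
        calc K * ((v - s) ^ (m + 1) / ((m : ℝ) + 1))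
            ≤ K * ((v - s) ^ (m + 1) / 1) := by
              apply mul_le_mul_of_nonneg_left _ hK0
              exact div_le_div_of_nonneg_left (by positivity) one_pos hd
          _ = K * (v - s) ^ (m + 1) := by rw [div_one]
      have hfirst : 2 * ((m : ℝ) + 1) ^ 2 * L * (∫ r in s..v, f m r)
          ≤ a * (v - s) ^ (m + 1) := by
        rw [ha_def]
        have hc : (0 : ℝ) ≤ 2 * ((m : ℝ) + 1) ^ 2 * L := by positivity
        calc 2 * ((m : ℝ) + 1) ^ 2 * L * (∫ r in s..v, f m r)
            ≤ 2 * ((m : ℝ) + 1) ^ 2 * L * (K * (v - s) ^ (m + 1)) :=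
              mul_le_mul_of_nonneg_left (hmono.trans hcalc) hc
          _ = 2 * ((m : ℝ) + 1) ^ 2 * L * K * (v - s) ^ (m + 1) := by ring
      have hcast : ((m + 1 : ℕ) : ℝ) = (m : ℝ) + 1 := by push_cast; ring
      calc f (m + 1) v ≤ 2 * ((m + 1 : ℕ) : ℝ) ^ 2 * L * (∫ r in s..v, f m r)
            + 2 * ((m + 1 : ℕ) : ℝ) * ∫ r in s..v, f (m + 1) r := hstep
        _ = 2 * ((m : ℝ) + 1) ^ 2 * L * (∫ r in s..v, f m r)
            + b * ∫ r in s..v, f (m + 1) r := by rw [hcast, hb_def]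
        _ ≤ a * (v - s) ^ (m + 1) + b * ∫ r in s..v, f (m + 1) r := by linarith
    have hg := my_gronwall_poly s t a b M hst ha hb (m + 1) (f (m + 1))
      (hcont (m + 1)) hM hineq u hu
    have hx : 0 ≤ u - s := sub_nonneg.2 hu.1
    have hexp : Real.exp (b * (t - s)) ≤ Real.exp (b * T₀) := by
      rw [Real.exp_le_exp]
      exact mul_le_mul_of_nonneg_left hT hb
    calc f (m + 1) u ≤ a * Real.exp (b * (t - s)) * (u - s) ^ (m + 1) := hg
      _ ≤ a * Real.exp (b * T₀) * (u - s) ^ (m + 1) := by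
        have := mul_le_mul_of_nonneg_left hexp ha
        exact mul_le_mul_of_nonneg_right this (by positivity)

theorem moment_bound_induction (L T₀ : ℝ) (hL : 0 < L) (hT₀ : 0 < T₀) :
    ∀ m : ℕ, 1 ≤ m → ∃ K : ℝ, ∀ s t : ℝ, s ≤ t → t - s ≤ T₀ →
      ∀ f : ℕ → ℝ → ℝ,
        (∀ k, ContinuousOn (f k) (Set.Icc s t)) →
        (∀ k, ∀ u ∈ Set.Icc s t, 0 ≤ f k u) →
        (∀ k, f k s = 0) →
        (∀ u ∈ Set.Icc s t, f 1 u ≤ L * (u - s) + ∫ r in s..u, f 1 r) →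
        (∀ k, 2 ≤ k → ∀ u ∈ Set.Icc s t,
          f k u ≤ 2 * (k : ℝ) ^ 2 * L * (∫ r in s..u, f (k - 1) r)
            + 2 * (k : ℝ) * ∫ r in s..u, f k r) →
        f m t ≤ K * (t - s) ^ m := by
  intro m hm
  obtain ⟨K, _, h⟩ := my_main L T₀ hL hT₀ m hm
  exact ⟨K, fun s t hst hT f hcont hnn hzero h1 h2 =>
    h s t hst hT f hcont hnn hzero h1 h2 t ⟨hst, le_rfl⟩⟩
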